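/- Let χ_h := i^m γ^1⋯γ^n (n = 2m) be the Hodge grading on the exterior algebra. Then χ_h λ_±^p = λ_∓^p χ_h for all p; moreover, if B = (1/2) Σ T_{ijk}(λ_+^j λ_+^i λ_-^k + λ_+^k λ_-^i λ_-^j) anticommutes with χ_h, then Σ_j T_{ijj} = 0 for all i. -/

import Mathlib

open Matrix BigOperators

/-- Exterior multiplication by the basis vector `e^p` on the exterior algebra
`Λ(ℂ^n)`, realized as a matrix on the basis of `Λ(ℂ^n)` indexed by subsets of
`{1,...,n}`, with the standard sign `ε^I_{pJ}`. -/
noncomputable def lamP (n : ℕ) (p : Fin n) :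
    Matrix (Finset (Fin n)) (Finset (Fin n)) ℂ :=
  fun I J => if p ∉ J ∧ I = insert p J then (-1 : ℂ) ^ (J.filter (· < p)).card else 0

/-- The contraction (interior product) with `e_p`: the adjoint of `lamP n p`. -/
noncomputable def lamM (n : ℕ) (p : Fin n) :
    Matrix (Finset (Fin n)) (Finset (Fin n)) ℂ :=
  (lamP n p)ᴴ

/-- `γ^p = -i (λ_+^p - λ_-^p)`. -/
noncomputable def gam (n : ℕ) (p : Fin n) : Matrix (Finset (Fin n)) (Finset (Fin n)) ℂ :=
  (-Complex.I) • (lamP n p - lamM n p)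

/-- `γ̃^p = λ_+^p + λ_-^p`. -/
noncomputable def gamT (n : ℕ) (p : Fin n) : Matrix (Finset (Fin n)) (Finset (Fin n)) ℂ :=
  lamP n p + lamM n p

/-! The operators `γ^p` and `γ̃^p = λ₊^p + λ₋^p` satisfy Clifford relations, consequences of the
canonical anticommutation relations of `λ₊, λ₋`. Hence `χ_h`, a multiple of the product of all
`n = 2m` generators `γ^p`, anticommutes with every `γ^p` and commutes with every `γ̃^p`; since
`λ_± = ½ (γ̃ ± iγ)` this gives `χ_h λ_± = λ_∓ χ_h`. Consequently `χ_h B = B' χ_h`, where `B'` is `B`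
with `λ₊` and `λ₋` exchanged, and as `χ_h` is invertible, `χ_h B + B χ_h = 0` forces `B' + B = 0`.
Apply this to the vacuum `e_∅`: every term of `B` ends in a contraction and kills it, while by the
anticommutation relations the `e_i`-component of `B' e_∅` is
`½ (∑_j T_{jij} - ∑_j T_{ijj}) = -∑_j T_{ijj}`. -/

theorem List.mul_prod_map_eq_smul {ι S R : Type*} [CommSemiring S] [Semiring R] [Algebra S R]
    {x : R} {f : ι → R} {c : ι → S} (l : List ι) (h : ∀ i ∈ l, x * f i = c i • (f i * x)) :
    x * (l.map f).prod = (l.map c).prod • ((l.map f).prod * x) := by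
  induction l with
  | nil => simp
  | cons i l ih =>
    simp only [List.map_cons, List.prod_cons, List.forall_mem_cons] at h ⊢
    rw [← mul_assoc, h.1, smul_mul_assoc, mul_assoc, ih h.2, mul_smul_comm, smul_smul,
      mul_assoc]

theorem SemiconjBy.sum_right {ι R : Type*} [NonUnitalNonAssocSemiring R] {a : R}
    (s : Finset ι) {x y : ι → R} (h : ∀ i ∈ s, SemiconjBy a (x i) (y i)) :
    SemiconjBy a (∑ i ∈ s, x i) (∑ i ∈ s, y i) := by
  simpa only [SemiconjBy, Finset.mul_sum, Finset.sum_mul] using Finset.sum_congr rfl h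

-- With `a = λ₊` and `b = λ₋` this is the operator `B`.
noncomputable def cubicOp {ι R : Type*} [Fintype ι] [Ring R] [Algebra ℂ R] (a b : ι → R)
    (T : ι → ι → ι → ℝ) : R :=
  (1 / 2 : ℂ) • ∑ i, ∑ j, ∑ k, (T i j k : ℂ) • (a j * a i * b k + a k * b i * b j)

theorem semiconjBy_cubicOp {ι R : Type*} [Fintype ι] [Ring R] [Algebra ℂ R] {x : R}
    {a b : ι → R} (hab : ∀ p, SemiconjBy x (a p) (b p)) (hba : ∀ p, SemiconjBy x (b p) (a p))
    (T : ι → ι → ι → ℝ) : SemiconjBy x (cubicOp a b T) (cubicOp b a T) := by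
  refine .smul_right (.sum_right _ fun i _ => .sum_right _ fun j _ =>
    .sum_right _ fun k _ => .smul_right (.add_right ?_ ?_) _) _
  · exact ((hab j).mul_right (hab i)).mul_right (hba k)
  · exact ((hab k).mul_right (hba i)).mul_right (hba j)

section

variable {n : ℕ}

noncomputable def insertSign (J : Finset (Fin n)) (p : Fin n) : ℂ :=
  (-1) ^ (J.filter (· < p)).card

theorem insertSign_mul_self (J : Finset (Fin n)) (p : Fin n) :
    insertSign J p * insertSign J p = 1 := by
  rw [insertSign, ← pow_add, Even.neg_one_pow ⟨_, rfl⟩]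

theorem insertSign_insert_self (J : Finset (Fin n)) (p : Fin n) :
    insertSign (insert p J) p = insertSign J p := by
  rw [insertSign, insertSign, Finset.filter_insert, if_neg (lt_irrefl p)]

theorem insertSign_erase_self (J : Finset (Fin n)) (p : Fin n) :
    insertSign (J.erase p) p = insertSign J p := by
  rw [insertSign, insertSign, Finset.filter_erase, Finset.erase_eq_of_notMem (by simp)]

theorem insertSign_insert {J : Finset (Fin n)} {p : Fin n} (hp : p ∉ J) (q : Fin n) :
    insertSign (insert p J) q = (if p < q then -1 else 1) * insertSign J q := by
  rw [insertSign, insertSign, Finset.filter_insert]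
  split_ifs with h
  · rw [Finset.card_insert_of_notMem (by simp [hp]), pow_succ, mul_comm]
  · rw [one_mul]

theorem lamP_apply (p : Fin n) (I J : Finset (Fin n)) :
    lamP n p I J = if p ∉ J ∧ I = insert p J then insertSign J p else 0 := rfl

theorem lamM_apply (p : Fin n) (I J : Finset (Fin n)) :
    lamM n p I J = if p ∉ I ∧ J = insert p I then insertSign I p else 0 := by
  simp only [lamM, conjTranspose_apply, lamP, insertSign]
  split_ifs <;> simp

theorem mul_lamP_apply (M : Matrix (Finset (Fin n)) (Finset (Fin n)) ℂ) (p : Fin n)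
    (I J : Finset (Fin n)) :
    (M * lamP n p) I J = if p ∈ J then 0 else M I (insert p J) * insertSign J p := by
  rw [mul_apply, Finset.sum_eq_single (insert p J)]
  · by_cases hp : p ∈ J <;> simp [lamP, hp, insertSign]
  · intro K _ hK
    simp [lamP, hK]
  · simp

theorem mul_lamM_apply (M : Matrix (Finset (Fin n)) (Finset (Fin n)) ℂ) (p : Fin n)
    (I J : Finset (Fin n)) :
    (M * lamM n p) I J = if p ∈ J then M I (J.erase p) * insertSign J p else 0 := by
  rw [mul_apply, Finset.sum_eq_single (J.erase p)]
  · by_cases hp : p ∈ J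
    · simp [lamM_apply, hp, Finset.insert_erase, insertSign_erase_self]
    · simp [lamM_apply, hp, Finset.ne_insert_of_notMem _ _ hp]
  · intro K _ hK
    rw [lamM_apply, if_neg, mul_zero]
    rintro ⟨hpK, rfl⟩
    exact hK (Finset.erase_insert hpK).symm
  · simp

theorem lamP_anticomm (p q : Fin n) : lamP n p * lamP n q + lamP n q * lamP n p = 0 := by
  ext I J
  simp only [Matrix.add_apply, mul_lamP_apply, Matrix.zero_apply, lamP_apply]
  by_cases hpq : p = q
  · subst hpq; simp
  by_cases hp : p ∈ J
  · simp [hp]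
  by_cases hq : q ∈ J
  · simp [hq]
  simp only [hp, hq, if_false, Finset.mem_insert, hpq, Ne.symm hpq, false_or, not_false_eq_true,
    true_and, Finset.insert_comm p q]
  split_ifs
  · rw [insertSign_insert hq, insertSign_insert hp]
    rcases lt_or_gt_of_ne hpq with h | h <;> simp [h, not_lt_of_gt h] <;> ring
  · simp

theorem lamM_anticomm (p q : Fin n) : lamM n p * lamM n q + lamM n q * lamM n p = 0 := by
  simpa [lamM, ← conjTranspose_mul, add_comm] using congrArg conjTranspose (lamP_anticomm p q)

theorem lamP_lamM_anticomm (p q : Fin n) :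
    lamP n p * lamM n q + lamM n q * lamP n p = if p = q then 1 else 0 := by
  ext I J
  simp only [Matrix.add_apply, mul_lamM_apply, mul_lamP_apply, lamP_apply, lamM_apply]
  by_cases hpq : p = q
  · subst hpq
    by_cases hp : p ∈ J
    · have hJ : insert p (J.erase p) = J := Finset.insert_erase hp
      simp [hp, hJ, insertSign_erase_self, insertSign_mul_self, one_apply]
    · have hIJ : (p ∉ I ∧ insert p J = insert p I) ↔ I = J := by
        constructor
        · rintro ⟨hpI, h⟩
          rw [← Finset.erase_insert hpI, ← h, Finset.erase_insert hp]
        · rintro rfl; exact ⟨hp, rfl⟩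
      simp only [hp, if_false, if_true, hIJ, one_apply]
      split_ifs with h
      · simp [h, insertSign_mul_self]
      · simp
  rw [if_neg hpq, Matrix.zero_apply]
  by_cases hp : p ∈ J
  · simp [hp, hpq]
  by_cases hq : q ∈ J
  swap
  · have hJI : insert p J ≠ insert q I := fun h =>
      hq ((Finset.mem_insert.mp (h ▸ Finset.mem_insert_self q I)).resolve_left (Ne.symm hpq))
    simp [hp, hq, hJI]
  obtain ⟨K, hqK, rfl⟩ : ∃ K, q ∉ K ∧ J = insert q K :=
    ⟨J.erase q, Finset.notMem_erase q J, (Finset.insert_erase hq).symm⟩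
  have hpK : p ∉ K := fun h => hp (Finset.mem_insert_of_mem h)
  have hIK : (q ∉ I ∧ insert p (insert q K) = insert q I) ↔ I = insert p K := by
    constructor
    · rintro ⟨hqI, h⟩
      rw [← Finset.erase_insert hqI, ← h, Finset.insert_comm, Finset.erase_insert]
      simp [hqK, Ne.symm hpq]
    · rintro rfl
      exact ⟨by simp [hqK, Ne.symm hpq], Finset.insert_comm p q K⟩
  simp only [Finset.mem_insert_self, if_true, hp, if_false, Finset.erase_insert hqK, hpK,
    not_false_eq_true, true_and, hIK]
  split_ifs with hI
  · subst hI
    rw [insertSign_insert_self, insertSign_insert hpK, insertSign_insert hqK]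
    rcases lt_or_gt_of_ne hpq with h | h <;> simp [h, not_lt_of_gt h] <;> ring
  · simp

theorem gam_mul_gam (p q : Fin n) :
    gam n p * gam n q = -(lamP n p * lamP n q - lamP n p * lamM n q - lamM n p * lamP n q
      + lamM n p * lamM n q) := by
  simp only [gam, smul_mul_smul_comm, neg_mul_neg, Complex.I_mul_I, mul_sub, sub_mul]
  module

theorem gam_mul_gam_of_ne {p q : Fin n} (hpq : p ≠ q) :
    gam n p * gam n q = -(gam n q * gam n p) := by
  have hP := lamP_anticomm (n := n) p q
  have hM := lamM_anticomm (n := n) p q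
  have hPM := lamP_lamM_anticomm (n := n) p q
  have hMP := lamP_lamM_anticomm (n := n) q p
  rw [if_neg hpq] at hPM
  rw [if_neg (Ne.symm hpq)] at hMP
  rw [gam_mul_gam, gam_mul_gam]
  linear_combination (norm := module) -hP + hPM + hMP - hM

theorem gam_mul_self (p : Fin n) : gam n p * gam n p = 1 := by
  have hP := lamP_anticomm (n := n) p p
  have hM := lamM_anticomm (n := n) p p
  have hPM := lamP_lamM_anticomm (n := n) p p
  rw [if_pos rfl] at hPM
  rw [gam_mul_gam]
  linear_combination (norm := module) -(1/2 : ℂ) • hP + hPM - (1/2 : ℂ) • hM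

theorem gamT_mul_gam (p q : Fin n) : gamT n p * gam n q = -(gam n q * gamT n p) := by
  have hP := lamP_anticomm (n := n) p q
  have hM := lamM_anticomm (n := n) p q
  have hPM := lamP_lamM_anticomm (n := n) p q
  have hMP := lamP_lamM_anticomm (n := n) q p
  simp only [gam, gamT, mul_smul_comm, smul_mul_assoc, mul_sub, sub_mul, mul_add, add_mul]
  simp only [@eq_comm _ q p] at hMP
  linear_combination (norm := module) (-Complex.I) • (hP - hPM + hMP - hM)

end

noncomputable def hodgeGrading (m : ℕ) : Matrix (Finset (Fin (2 * m))) (Finset (Fin (2 * m))) ℂ :=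
  Complex.I ^ m • ((List.finRange (2 * m)).map (gam (2 * m))).prod

theorem isUnit_hodgeGrading (m : ℕ) : IsUnit (hodgeGrading m) := by
  have hprod : IsUnit ((List.finRange (2 * m)).map (gam (2 * m))).prod :=
    List.prod_isUnit fun M hM => by
      obtain ⟨p, -, rfl⟩ := List.mem_map.mp hM
      exact ⟨⟨_, _, gam_mul_self p, gam_mul_self p⟩, rfl⟩
  simpa [hodgeGrading, Units.smul_def] using
    hprod.smul (Units.mk0 (Complex.I ^ m) (pow_ne_zero m Complex.I_ne_zero))

section

variable {m : ℕ}

theorem gam_mul_hodgeGrading (p : Fin (2 * m)) :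
    gam (2 * m) p * hodgeGrading m = -(hodgeGrading m * gam (2 * m) p) := by
  have h : ∀ q ∈ List.finRange (2 * m), gam (2 * m) p * gam (2 * m) q
      = (-if q = p then -1 else 1 : ℂ) • (gam (2 * m) q * gam (2 * m) p) := by
    intro q _
    split_ifs with hqp
    · rw [hqp, neg_neg, one_smul]
    · rw [gam_mul_gam_of_ne (Ne.symm hqp), neg_one_smul]
  have hsign :
      ((List.finRange (2 * m)).map fun q => (-if q = p then -1 else 1 : ℂ)).prod = -1 := by
    rw [← Fin.prod_univ_def, Finset.prod_neg, Finset.prod_ite_eq']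
    simp [pow_mul]
  rw [hodgeGrading, mul_smul_comm, List.mul_prod_map_eq_smul _ h, hsign, smul_mul_assoc,
    neg_one_smul, smul_neg]

theorem gamT_mul_hodgeGrading (p : Fin (2 * m)) :
    gamT (2 * m) p * hodgeGrading m = hodgeGrading m * gamT (2 * m) p := by
  have h : ∀ q ∈ List.finRange (2 * m), gamT (2 * m) p * gam (2 * m) q
      = (-1 : ℂ) • (gam (2 * m) q * gamT (2 * m) p) := fun q _ => by
    rw [gamT_mul_gam, neg_one_smul]
  have hsign : ((List.finRange (2 * m)).map fun _ => (-1 : ℂ)).prod = 1 := by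
    rw [← Fin.prod_univ_def]
    simp [pow_mul]
  rw [hodgeGrading, mul_smul_comm, List.mul_prod_map_eq_smul _ h, hsign, one_smul,
    smul_mul_assoc]

theorem lamP_sub_lamM_mul_hodgeGrading (p : Fin (2 * m)) :
    (lamP (2 * m) p - lamM (2 * m) p) * hodgeGrading m
      = -(hodgeGrading m * (lamP (2 * m) p - lamM (2 * m) p)) := by
  have h := gam_mul_hodgeGrading p
  rwa [gam, smul_mul_assoc, mul_smul_comm, ← smul_neg,
    smul_right_inj (neg_ne_zero.mpr Complex.I_ne_zero)] at h

theorem semiconjBy_hodgeGrading_lamP (p : Fin (2 * m)) :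
    SemiconjBy (hodgeGrading m) (lamP (2 * m) p) (lamM (2 * m) p) := by
  have hsum := gamT_mul_hodgeGrading p
  have hdiff := lamP_sub_lamM_mul_hodgeGrading p
  simp only [gamT, add_mul, mul_add, sub_mul, mul_sub] at hsum hdiff
  unfold SemiconjBy
  linear_combination (norm := module) (-1 / 2 : ℂ) • hsum + (1 / 2 : ℂ) • hdiff

theorem semiconjBy_hodgeGrading_lamM (p : Fin (2 * m)) :
    SemiconjBy (hodgeGrading m) (lamM (2 * m) p) (lamP (2 * m) p) := by
  have hsum := gamT_mul_hodgeGrading p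
  have hdiff := lamP_sub_lamM_mul_hodgeGrading p
  simp only [gamT, add_mul, mul_add, sub_mul, mul_sub] at hsum hdiff
  unfold SemiconjBy
  linear_combination (norm := module) (-1 / 2 : ℂ) • hsum - (1 / 2 : ℂ) • hdiff

theorem cubicOp_swap_add_cubicOp_eq_zero_of_anticomm
    (T : Fin (2 * m) → Fin (2 * m) → Fin (2 * m) → ℝ)
    (h : hodgeGrading m * cubicOp (lamP (2 * m)) (lamM (2 * m)) T
      + cubicOp (lamP (2 * m)) (lamM (2 * m)) T * hodgeGrading m = 0) :
    cubicOp (lamM (2 * m)) (lamP (2 * m)) T + cubicOp (lamP (2 * m)) (lamM (2 * m)) T = 0 := by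
  rwa [← (isUnit_hodgeGrading m).mul_left_eq_zero, add_mul,
    ← (semiconjBy_cubicOp semiconjBy_hodgeGrading_lamP semiconjBy_hodgeGrading_lamM T).eq]

end

section

variable {n : ℕ}

theorem lamM_mulVec_vacuum (p : Fin n) : lamM n p *ᵥ Pi.single ∅ 1 = 0 := by
  ext I
  simp [lamM_apply, (Finset.insert_ne_empty p I).symm]

theorem lamP_mulVec_vacuum (p : Fin n) : lamP n p *ᵥ Pi.single ∅ 1 = Pi.single {p} 1 := by
  ext I
  by_cases hI : I = {p}
  · simp [lamP_apply, hI, insertSign]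
  · simp [lamP_apply, hI]

theorem lamM_mulVec_lamP_mulVec (p q : Fin n) (v : Finset (Fin n) → ℂ) :
    lamM n q *ᵥ lamP n p *ᵥ v = (if p = q then v else 0) - lamP n p *ᵥ lamM n q *ᵥ v := by
  rw [mulVec_mulVec, mulVec_mulVec, eq_sub_iff_add_eq, ← add_mulVec, add_comm,
    lamP_lamM_anticomm]
  split_ifs <;> simp

theorem lamM_mulVec_single_singleton (p q : Fin n) :
    lamM n q *ᵥ Pi.single {p} 1 = if p = q then Pi.single ∅ 1 else 0 := by
  rw [← lamP_mulVec_vacuum, lamM_mulVec_lamP_mulVec, lamM_mulVec_vacuum, mulVec_zero, sub_zero]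

theorem lamM_mulVec_lamP_mulVec_single_singleton (i j k : Fin n) :
    lamM n k *ᵥ lamP n i *ᵥ Pi.single {j} 1
      = (if i = k then Pi.single {j} 1 else 0) - (if j = k then Pi.single {i} 1 else 0) := by
  rw [lamM_mulVec_lamP_mulVec, lamM_mulVec_single_singleton]
  split_ifs <;> simp only [lamP_mulVec_vacuum, mulVec_zero, sub_zero, zero_sub]

theorem lamM_mulVec_lamM_mulVec_single_singleton (i j k : Fin n) :
    lamM n j *ᵥ lamM n i *ᵥ Pi.single {k} 1 = 0 := by
  rw [lamM_mulVec_single_singleton]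
  split_ifs <;> simp only [lamM_mulVec_vacuum, mulVec_zero]

theorem cubicOp_lamP_lamM_mulVec_vacuum (T : Fin n → Fin n → Fin n → ℝ) :
    cubicOp (lamP n) (lamM n) T *ᵥ Pi.single ∅ 1 = 0 := by
  simp only [cubicOp, smul_mulVec, sum_mulVec, add_mulVec, ← mulVec_mulVec, lamM_mulVec_vacuum,
    mulVec_zero, add_zero, smul_zero, Finset.sum_const_zero]

theorem cubicOp_lamM_lamP_mulVec_vacuum_apply (T : Fin n → Fin n → Fin n → ℝ) (p : Fin n) :
    (cubicOp (lamM n) (lamP n) T *ᵥ Pi.single ∅ 1) {p}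
      = (1 / 2 : ℂ) * (∑ i, (T i p i : ℂ) - ∑ j, (T p j j : ℂ)) := by
  simp only [cubicOp, smul_mulVec, sum_mulVec, add_mulVec, ← mulVec_mulVec, lamP_mulVec_vacuum,
    lamM_mulVec_lamM_mulVec_single_singleton, lamM_mulVec_lamP_mulVec_single_singleton]
  simp [ite_apply, Pi.single_apply, Finset.sum_sub_distrib, mul_sub]

theorem sum_diag_eq_zero_of_cubicOp_swap_add_cubicOp_eq_zero
    {T : Fin n → Fin n → Fin n → ℝ} (hT : ∀ i j k, T i j k = -T j i k)
    (h : cubicOp (lamM n) (lamP n) T + cubicOp (lamP n) (lamM n) T = 0) (i : Fin n) :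
    ∑ j, T i j j = 0 := by
  have hvac := congrFun (congrArg (· *ᵥ Pi.single ∅ 1) h) {i}
  simp only [add_mulVec, Pi.add_apply, cubicOp_lamP_lamM_mulVec_vacuum, add_zero,
    cubicOp_lamM_lamP_mulVec_vacuum_apply, zero_mulVec, Pi.zero_apply] at hvac
  have hswap : ∑ j, (T j i j : ℂ) = -∑ j, (T i j j : ℂ) := by
    simp [hT _ i, Finset.sum_neg_distrib]
  rw [hswap] at hvac
  exact_mod_cast (by linear_combination -hvac : ∑ j, (T i j j : ℂ) = 0)

end

theorem stmt11 (m : ℕ) (T : Fin (2 * m) → Fin (2 * m) → Fin (2 * m) → ℝ)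
    (hT : ∀ i j k, T i j k = -T j i k) :
    (∀ p, (Complex.I ^ m • ((List.finRange (2 * m)).map (gam (2 * m))).prod) * lamP (2 * m) p
        = lamM (2 * m) p * (Complex.I ^ m • ((List.finRange (2 * m)).map (gam (2 * m))).prod) ∧
      (Complex.I ^ m • ((List.finRange (2 * m)).map (gam (2 * m))).prod) * lamM (2 * m) p
        = lamP (2 * m) p * (Complex.I ^ m • ((List.finRange (2 * m)).map (gam (2 * m))).prod)) ∧
    (((Complex.I ^ m • ((List.finRange (2 * m)).map (gam (2 * m))).prod) *
        ((1 / 2 : ℂ) • ∑ i, ∑ j, ∑ k, (T i j k : ℂ) •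
          (lamP (2 * m) j * lamP (2 * m) i * lamM (2 * m) k
            + lamP (2 * m) k * lamM (2 * m) i * lamM (2 * m) j)) +
      ((1 / 2 : ℂ) • ∑ i, ∑ j, ∑ k, (T i j k : ℂ) •
          (lamP (2 * m) j * lamP (2 * m) i * lamM (2 * m) k
            + lamP (2 * m) k * lamM (2 * m) i * lamM (2 * m) j)) *
        (Complex.I ^ m • ((List.finRange (2 * m)).map (gam (2 * m))).prod) = 0) →
      ∀ i, ∑ j, T i j j = 0) :=
  ⟨fun p => ⟨semiconjBy_hodgeGrading_lamP p, semiconjBy_hodgeGrading_lamM p⟩,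
    fun h => sum_diag_eq_zero_of_cubicOp_swap_add_cubicOp_eq_zero hT
      (cubicOp_swap_add_cubicOp_eq_zero_of_anticomm T h)⟩
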